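/- For all k, ℓ ∈ ℤ² ∖ {(0,0)}, with a = (k₂ℓ₁ − k₁ℓ₂)/(|k||ℓ|), one has 𝒵^{0,1}_{k,ℓ}(x) − 𝒵^{0,1}_{ℓ,k}(x) = a·cos((k+ℓ)·x)·(−(k₂ + ℓ₂), k₁ + ℓ₁) for all x ∈ ℝ²; moreover, if k + ℓ ≠ (0,0) then ⟨𝒵^{0,1}_{k,ℓ} − 𝒵^{0,1}_{ℓ,k}, e^0_{k+ℓ}⟩_{L²} = −2π²·a·|k+ℓ|. -/

import Mathlib

/-- Euclidean norm of an integer vector. -/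
noncomputable def znorm (k : ℤ × ℤ) : ℝ := Real.sqrt ((k.1 : ℝ) ^ 2 + (k.2 : ℝ) ^ 2)

/-- The pairing `k · x = k₁x₁ + k₂x₂`. -/
noncomputable def kdot (k : ℤ × ℤ) (x : ℝ × ℝ) : ℝ := (k.1 : ℝ) * x.1 + (k.2 : ℝ) * x.2

/-- The vector field `e_k^0(x) = (k₂/|k|, −k₁/|k|)·cos(k·x)`. -/
noncomputable def e0 (k : ℤ × ℤ) : ℝ × ℝ → ℝ × ℝ := fun x =>
  (((k.2 : ℝ) / znorm k) * Real.cos (kdot k x), (-(k.1 : ℝ) / znorm k) * Real.cos (kdot k x))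

/-- The vector field `e_k^1(x) = (−k₂/|k|, k₁/|k|)·sin(k·x)`. -/
noncomputable def e1 (k : ℤ × ℤ) : ℝ × ℝ → ℝ × ℝ := fun x =>
  ((-(k.2 : ℝ) / znorm k) * Real.sin (kdot k x), ((k.1 : ℝ) / znorm k) * Real.sin (kdot k x))

/-- The advection `b(u,v) = (u·∇)v`, i.e. the derivative of `v` in the direction `u`. -/
noncomputable def adv (u v : ℝ × ℝ → ℝ × ℝ) : ℝ × ℝ → ℝ × ℝ := fun x => fderiv ℝ v x (u x)

/-- The `L²` pairing `⟨f,g⟩ = ∫_{[−π,π]²} f(x)·g(x) dx`. -/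
noncomputable def pairL2 (f g : ℝ × ℝ → ℝ × ℝ) : ℝ :=
  ∫ x in Set.Icc ((-Real.pi, -Real.pi) : ℝ × ℝ) ((Real.pi, Real.pi) : ℝ × ℝ),
    ((f x).1 * (g x).1 + (f x).2 * (g x).2)

/-- `𝒥^{0,1}_{k,ℓ} = b(e_k^0, e_ℓ^1) + b(e_ℓ^1, e_k^0)`. -/
noncomputable def J01 (k l : ℤ × ℤ) : ℝ × ℝ → ℝ × ℝ := fun x =>
  adv (e0 k) (e1 l) x + adv (e1 l) (e0 k) x

/-- `𝒥^{0,0}_{k,ℓ} = b(e_k^0, e_ℓ^0) + b(e_ℓ^0, e_k^0)`. -/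
noncomputable def J00 (k l : ℤ × ℤ) : ℝ × ℝ → ℝ × ℝ := fun x =>
  adv (e0 k) (e0 l) x + adv (e0 l) (e0 k) x

/-- `𝒥^{1,1}_{k,ℓ} = b(e_k^1, e_ℓ^1) + b(e_ℓ^1, e_k^1)`. -/
noncomputable def J11 (k l : ℤ × ℤ) : ℝ × ℝ → ℝ × ℝ := fun x =>
  adv (e1 k) (e1 l) x + adv (e1 l) (e1 k) x

/-- `𝒵^{0,1}_{k,ℓ} = b(e_k^0, e_ℓ^1) − b(e_ℓ^1, e_k^0)`. -/
noncomputable def Z01 (k l : ℤ × ℤ) : ℝ × ℝ → ℝ × ℝ := fun x =>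
  adv (e0 k) (e1 l) x - adv (e1 l) (e0 k) x

/-- `𝒵^{0,0}_{k,ℓ} = b(e_k^0, e_ℓ^0) − b(e_ℓ^0, e_k^0)`. -/
noncomputable def Z00 (k l : ℤ × ℤ) : ℝ × ℝ → ℝ × ℝ := fun x =>
  adv (e0 k) (e0 l) x - adv (e0 l) (e0 k) x

/-- `𝒵^{1,1}_{k,ℓ} = b(e_k^1, e_ℓ^1) − b(e_ℓ^1, e_k^1)`. -/
noncomputable def Z11 (k l : ℤ × ℤ) : ℝ × ℝ → ℝ × ℝ := fun x =>
  adv (e1 k) (e1 l) x - adv (e1 l) (e1 k) x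

/-! ### Auxiliary lemmas -/

open Real MeasureTheory

/-- The continuous linear map `v ↦ k · v`. -/
noncomputable def Lk (k : ℤ × ℤ) : ℝ × ℝ →L[ℝ] ℝ :=
  (k.1 : ℝ) • ContinuousLinearMap.fst ℝ ℝ ℝ + (k.2 : ℝ) • ContinuousLinearMap.snd ℝ ℝ ℝ

lemma Lk_apply (k : ℤ × ℤ) (v : ℝ × ℝ) : Lk k v = kdot k v := by
  simp [Lk, kdot]

lemma hasFDerivAt_kdot (k : ℤ × ℤ) (x : ℝ × ℝ) : HasFDerivAt (kdot k) (Lk k) x := by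
  have h : HasFDerivAt (fun x : ℝ × ℝ => (k.1 : ℝ) * x.1 + (k.2 : ℝ) * x.2) (Lk k) x :=
    (hasFDerivAt_fst.const_mul _).add (hasFDerivAt_snd.const_mul _)
  exact h

lemma hasFDerivAt_e1 (l : ℤ × ℤ) (x : ℝ × ℝ) :
    HasFDerivAt (e1 l)
      ((((-(l.2 : ℝ) / znorm l) * Real.cos (kdot l x)) • Lk l).prod
       ((((l.1 : ℝ) / znorm l) * Real.cos (kdot l x)) • Lk l)) x := by
  have hsin : HasFDerivAt (fun x => Real.sin (kdot l x)) (Real.cos (kdot l x) • Lk l) x :=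
    (Real.hasDerivAt_sin (kdot l x)).comp_hasFDerivAt x (hasFDerivAt_kdot l x)
  have h1 := hsin.const_mul (-(l.2 : ℝ) / znorm l)
  have h2 := hsin.const_mul ((l.1 : ℝ) / znorm l)
  have := h1.prodMk h2
  simp [e1, smul_smul] at this ⊢
  exact this

lemma hasFDerivAt_e0 (k : ℤ × ℤ) (x : ℝ × ℝ) :
    HasFDerivAt (e0 k)
      ((-((((k.2 : ℝ) / znorm k) * Real.sin (kdot k x)) • Lk k)).prod
       (-(((-(k.1 : ℝ) / znorm k) * Real.sin (kdot k x)) • Lk k))) x := by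
  have hcos : HasFDerivAt (fun x => Real.cos (kdot k x)) ((-Real.sin (kdot k x)) • Lk k) x :=
    (Real.hasDerivAt_cos (kdot k x)).comp_hasFDerivAt x (hasFDerivAt_kdot k x)
  have h1 := hcos.const_mul ((k.2 : ℝ) / znorm k)
  have h2 := hcos.const_mul (-(k.1 : ℝ) / znorm k)
  have := h1.prodMk h2
  simp [e0, smul_smul, neg_smul, smul_neg] at this ⊢
  exact this

lemma adv_e0_e1 (k l : ℤ × ℤ) (x : ℝ × ℝ) :
    adv (e0 k) (e1 l) x =
      ((-(l.2 : ℝ) / znorm l) * Real.cos (kdot l x) * kdot l (e0 k x),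
       ((l.1 : ℝ) / znorm l) * Real.cos (kdot l x) * kdot l (e0 k x)) := by
  rw [adv, (hasFDerivAt_e1 l x).fderiv]
  simp [mul_assoc, Lk_apply]

lemma adv_e1_e0 (k l : ℤ × ℤ) (x : ℝ × ℝ) :
    adv (e1 l) (e0 k) x =
      (-(((k.2 : ℝ) / znorm k) * Real.sin (kdot k x) * kdot k (e1 l x)),
       -((-(k.1 : ℝ) / znorm k) * Real.sin (kdot k x) * kdot k (e1 l x))) := by
  rw [adv, (hasFDerivAt_e0 k x).fderiv]
  simp [mul_assoc, Lk_apply, smul_smul]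

lemma znorm_pos {k : ℤ × ℤ} (hk : k ≠ (0, 0)) : 0 < znorm k := by
  have h1 : k.1 ≠ 0 ∨ k.2 ≠ 0 := by
    by_contra h; push_neg at h
    exact hk (Prod.ext h.1 h.2)
  have h : (0:ℝ) < (k.1 : ℝ) ^ 2 + (k.2 : ℝ) ^ 2 := by
    rcases h1 with h1 | h1
    · have : ((k.1 : ℝ)) ≠ 0 := Int.cast_ne_zero.mpr h1
      positivity
    · have : ((k.2 : ℝ)) ≠ 0 := Int.cast_ne_zero.mpr h1
      positivity
  exact Real.sqrt_pos.mpr h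

lemma Z01_part1 (k l : ℤ × ℤ) (hk : k ≠ (0, 0)) (hl : l ≠ (0, 0))
    (a : ℝ) (ha : a = ((k.2 : ℝ) * (l.1 : ℝ) - (k.1 : ℝ) * (l.2 : ℝ)) / (znorm k * znorm l)) :
    ∀ x : ℝ × ℝ,
      Z01 k l x - Z01 l k x =
        (a * Real.cos (kdot (k + l) x) * (-((k.2 : ℝ) + (l.2 : ℝ))),
         a * Real.cos (kdot (k + l) x) * ((k.1 : ℝ) + (l.1 : ℝ))) := by
  intro x
  have hnk := (znorm_pos hk).ne'
  have hnl := (znorm_pos hl).ne'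
  have hadd : kdot (k + l) x = kdot k x + kdot l x := by
    simp only [kdot, Prod.fst_add, Prod.snd_add]; push_cast; ring
  rw [hadd, Real.cos_add]
  show adv (e0 k) (e1 l) x - adv (e1 l) (e0 k) x -
      (adv (e0 l) (e1 k) x - adv (e1 k) (e0 l) x) = _
  rw [adv_e0_e1, adv_e1_e0, adv_e0_e1, adv_e1_e0]
  subst ha
  simp only [e0, e1, kdot, Prod.mk_sub_mk, Prod.mk.injEq]
  constructor <;> (field_simp; ring)

lemma cos_sq_integral (n : ℤ) (hn : n ≠ 0) (c : ℝ) :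
    ∫ x in (-π)..π, Real.cos ((n : ℝ) * x + c) ^ 2 = π := by
  have hn' : ((n : ℝ)) ≠ 0 := Int.cast_ne_zero.mpr hn
  have hF : ∀ x : ℝ, HasDerivAt (fun y => y / 2 + Real.sin (2 * (n : ℝ) * y + 2 * c) / (4 * n))
      (Real.cos ((n : ℝ) * x + c) ^ 2) x := by
    intro x
    have hg : HasDerivAt (fun y : ℝ => 2 * (n : ℝ) * y + 2 * c) (2 * n) x := by
      simpa using ((hasDerivAt_id x).const_mul (2 * (n : ℝ))).add_const (2 * c)
    have hsin := (Real.hasDerivAt_sin (2 * (n : ℝ) * x + 2 * c)).comp x hg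
    have h := ((hasDerivAt_id x).div_const 2).add (hsin.div_const (4 * n))
    refine HasDerivAt.congr_deriv h ?_
    rw [Real.cos_sq ((n : ℝ) * x + c)]
    have : 2 * ((n : ℝ) * x + c) = 2 * (n : ℝ) * x + 2 * c := by ring
    rw [this]
    field_simp
    ring
  rw [intervalIntegral.integral_eq_sub_of_hasDerivAt (fun x _ => hF x)
      (by apply Continuous.intervalIntegrable; continuity)]
  have h1 : Real.sin (2 * (n : ℝ) * π + 2 * c) = Real.sin (2 * c) := by
    have : 2 * (n : ℝ) * π + 2 * c = 2 * c + (n : ℝ) * (2 * π) := by ring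
    rw [this, Real.sin_add_int_mul_two_pi]
  have h2 : Real.sin (2 * (n : ℝ) * (-π) + 2 * c) = Real.sin (2 * c) := by
    have : 2 * (n : ℝ) * (-π) + 2 * c = 2 * c + (-n : ℤ) * (2 * π) := by push_cast; ring
    rw [this, Real.sin_add_int_mul_two_pi]
  rw [h1, h2]
  ring

lemma Icc_to_interval (f : ℝ → ℝ) :
    ∫ x in Set.Icc (-π) π, f x = ∫ x in (-π)..π, f x := by
  rw [MeasureTheory.integral_Icc_eq_integral_Ioc,
    intervalIntegral.integral_of_le (by linarith [Real.pi_pos])]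

lemma cos_sq_double (m : ℤ × ℤ) (hm : m ≠ (0, 0)) :
    ∫ x in Set.Icc ((-π, -π) : ℝ × ℝ) ((π, π) : ℝ × ℝ), Real.cos (kdot m x) ^ 2
      = 2 * π ^ 2 := by
  have hcont : Continuous fun x : ℝ × ℝ => Real.cos (kdot m x) ^ 2 := by
    unfold kdot; continuity
  rw [Set.Icc_prod_eq]
  rw [MeasureTheory.Measure.volume_eq_prod]
  rw [MeasureTheory.setIntegral_prod _
    (hcont.continuousOn.integrableOn_compact (isCompact_Icc.prod isCompact_Icc))]
  simp only [kdot]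
  have hpi := Real.pi_pos
  by_cases h2 : m.2 ≠ 0
  · have inner : ∀ x : ℝ, ∫ y in Set.Icc (-π) π,
        Real.cos ((m.1 : ℝ) * x + (m.2 : ℝ) * y) ^ 2 = π := by
      intro x
      rw [Icc_to_interval]
      simp_rw [add_comm ((m.1 : ℝ) * x) _]
      exact cos_sq_integral m.2 h2 ((m.1 : ℝ) * x)
    calc ∫ x in Set.Icc (-π) π, ∫ y in Set.Icc (-π) π,
            Real.cos ((m.1 : ℝ) * x + (m.2 : ℝ) * y) ^ 2
        = ∫ x in Set.Icc (-π) π, (π : ℝ) := by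
          exact MeasureTheory.setIntegral_congr_fun measurableSet_Icc fun x _ => inner x
      _ = 2 * π ^ 2 := by
          rw [Icc_to_interval, intervalIntegral.integral_const]; simp; ring
  · push_neg at h2
    have h1 : m.1 ≠ 0 := by
      intro h1; exact hm (Prod.ext h1 h2)
    have inner : ∀ x : ℝ, ∫ y in Set.Icc (-π) π, Real.cos ((m.1 : ℝ) * x + (m.2 : ℝ) * y) ^ 2
        = 2 * π * Real.cos ((m.1 : ℝ) * x) ^ 2 := by
      intro x
      rw [Icc_to_interval]
      simp only [h2, Int.cast_zero, zero_mul, add_zero]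
      rw [intervalIntegral.integral_const, smul_eq_mul]
      ring
    calc ∫ x in Set.Icc (-π) π, ∫ y in Set.Icc (-π) π,
            Real.cos ((m.1 : ℝ) * x + (m.2 : ℝ) * y) ^ 2
        = ∫ x in Set.Icc (-π) π, 2 * π * Real.cos ((m.1 : ℝ) * x) ^ 2 := by
          exact MeasureTheory.setIntegral_congr_fun measurableSet_Icc fun x _ => inner x
      _ = 2 * π * ∫ x in Set.Icc (-π) π, Real.cos ((m.1 : ℝ) * x) ^ 2 := by
          rw [MeasureTheory.integral_const_mul]
      _ = 2 * π ^ 2 := by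
          rw [Icc_to_interval]
          have := cos_sq_integral m.1 h1 0
          simp only [add_zero] at this
          rw [this]; ring

theorem Z01_diff_identity_and_pairing (k l : ℤ × ℤ) (hk : k ≠ (0, 0)) (hl : l ≠ (0, 0))
    (a : ℝ) (ha : a = ((k.2 : ℝ) * (l.1 : ℝ) - (k.1 : ℝ) * (l.2 : ℝ)) / (znorm k * znorm l)) :
    (∀ x : ℝ × ℝ,
      Z01 k l x - Z01 l k x =
        (a * Real.cos (kdot (k + l) x) * (-((k.2 : ℝ) + (l.2 : ℝ))),
         a * Real.cos (kdot (k + l) x) * ((k.1 : ℝ) + (l.1 : ℝ)))) ∧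
    (k + l ≠ (0, 0) →
      pairL2 (fun x => Z01 k l x - Z01 l k x) (e0 (k + l)) =
        -(2 * Real.pi ^ 2 * a * znorm (k + l))) := by
  have hpt := Z01_part1 k l hk hl a ha
  refine ⟨hpt, fun hm => ?_⟩
  have hn : 0 < znorm (k + l) := znorm_pos hm
  have hn2 : znorm (k + l) ^ 2 = ((k + l).1 : ℝ) ^ 2 + ((k + l).2 : ℝ) ^ 2 :=
    Real.sq_sqrt (by positivity)
  have hc1 : ((k + l).1 : ℝ) = (k.1 : ℝ) + (l.1 : ℝ) := by
    simp [Prod.fst_add]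
  have hc2 : ((k + l).2 : ℝ) = (k.2 : ℝ) + (l.2 : ℝ) := by
    simp [Prod.snd_add]
  have hfun : ∀ x : ℝ × ℝ,
      ((Z01 k l x - Z01 l k x).1 * (e0 (k + l) x).1 +
        (Z01 k l x - Z01 l k x).2 * (e0 (k + l) x).2)
      = (-(a * znorm (k + l))) * Real.cos (kdot (k + l) x) ^ 2 := by
    intro x
    rw [hpt x]
    simp only [e0, hc1, hc2]
    rw [hc1, hc2] at hn2
    field_simp
    linear_combination (a * Real.cos (kdot (k + l) x) ^ 2) * hn2
  rw [pairL2]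
  calc (∫ x in Set.Icc ((-Real.pi, -Real.pi) : ℝ × ℝ) ((Real.pi, Real.pi) : ℝ × ℝ),
          ((Z01 k l x - Z01 l k x).1 * (e0 (k + l) x).1 +
            (Z01 k l x - Z01 l k x).2 * (e0 (k + l) x).2))
      = ∫ x in Set.Icc ((-Real.pi, -Real.pi) : ℝ × ℝ) ((Real.pi, Real.pi) : ℝ × ℝ),
          (-(a * znorm (k + l))) * Real.cos (kdot (k + l) x) ^ 2 :=
        MeasureTheory.setIntegral_congr_fun measurableSet_Icc fun x _ => hfun x
    _ = (-(a * znorm (k + l))) * ∫ x in Set.Icc ((-Real.pi, -Real.pi) : ℝ × ℝ)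
          ((Real.pi, Real.pi) : ℝ × ℝ), Real.cos (kdot (k + l) x) ^ 2 :=
        MeasureTheory.integral_const_mul _ _
    _ = -(2 * Real.pi ^ 2 * a * znorm (k + l)) := by
        rw [cos_sq_double (k + l) hm]; ring
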